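/- arXiv:1906.01053 — 3 statements merged into one kernel-verified Lean document; each statement's English description precedes it below -/
import Mathlib

section
/- Let N ≥ 1, L ∈ ℤ, and g : ℤ → ℂ with g(x) = 0 for all x < L. Fix x ∈ ℤ^N, an integer vector a = (a_1,…,a_N), and A ∈ ℤ. Then ∑_{z ∈ W_N with z_N < A} det[ ∇^{j−a_i} g(z_j − x_i) ]_{i,j=1}^N = det[ ∇^{j−1−a_i} g(A − x_i) ]_{i,j=1}^N, where only finitely many terms of the sum are nonzero. -/
open MeasureTheory ProbabilityTheory Complex
open scoped Real BigOperators Nat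

noncomputable section

/-- Forward difference operator `∇f(x) = f(x+1) − f(x)`. -/
def nab (f : ℤ → ℂ) : ℤ → ℂ := fun x => f (x + 1) - f x

/-- Inverse difference: `∇⁻¹f(x) = ∑_{y<x} f(y)` (a `tsum`; for functions vanishing
to the left of some integer this is the finite sum of the paper). -/
def nabInv (f : ℤ → ℂ) : ℤ → ℂ := fun x => ∑' y : {y : ℤ // y < x}, f y.1

/-- `∇^k` for `k : ℤ`. -/
def nabIter (k : ℤ) (f : ℤ → ℂ) : ℤ → ℂ :=
  if 0 ≤ k then nab^[k.toNat] f else nabInv^[(-k).toNat] f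

/-- The negative binomial weight `w_m(x)`. -/
def wgt (q : ℝ) (m : ℕ) : ℤ → ℂ := fun x =>
  if 0 ≤ x then ((x.toNat + m - 1).choose x.toNat : ℂ) * ((1 : ℂ) - (q : ℂ)) ^ m * (q : ℂ) ^ x
  else 0

/-- Component `x_k` (1-based) of a vector `x : Fin N → ℤ`. -/
def vcomp {N : ℕ} (x : Fin N → ℤ) (k : ℕ) : ℤ :=
  if h : k - 1 < N then x ⟨k - 1, h⟩ else 0

/-- 1-based access to a finite tuple, extended by `0` out of range. -/
def fext {d : ℕ} {α : Type*} [Zero α] (x : Fin d → α) : ℕ → α := fun k =>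
  if h : 1 ≤ k ∧ k ≤ d then x ⟨k - 1, by omega⟩ else 0

/-- The growth function `𝐆(m,n)` built from weights `w`. -/
def growth (w : ℕ → ℕ → ℕ) : ℕ → ℕ → ℕ
  | 0, _ => 0
  | _ + 1, 0 => 0
  | m + 1, n + 1 => max (growth w m (n + 1)) (growth w (m + 1) n) + w (m + 1) (n + 1)
  termination_by m n => m + n

/-- Normalized contour integral `(1/(2πi)) ∮_{|z−c|=R} f(z) dz` (counterclockwise circle). -/
def cint (c : ℂ) (R : ℝ) (f : ℂ → ℂ) : ℂ :=
  (2 * Real.pi * Complex.I)⁻¹ * (∮ z in C(c, R), f z)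

/-- Iterated normalized contour integrals with centers `c` and radii `R`. -/
def multiCintC : (k : ℕ) → (c : Fin k → ℂ) → (R : Fin k → ℝ) → ((Fin k → ℂ) → ℂ) → ℂ
  | 0, _, _, f => f ![]
  | k + 1, c, R, f =>
      cint (c 0) (R 0) fun z =>
        multiCintC k (fun t => c t.succ) (fun t => R t.succ) fun w => f (Fin.cons z w)

/-- `G*(w | n, m, a)`. -/
def Gstar (q : ℝ) (n m a : ℤ) (w : ℂ) : ℂ :=
  w ^ n * (1 - w) ^ (a + m) / (1 - w / (1 - (q : ℂ))) ^ m

/-- `G(w | n, m, a) = G*(w | n,m,a)/G*(1−√q | n,m,a)`. -/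
def Gfun (q : ℝ) (n m a : ℤ) (w : ℂ) : ℂ :=
  Gstar q n m a w / Gstar q n m a (1 - (Real.sqrt q : ℂ))

/-- The block index `r` such that `n_{r−1} < i ≤ n_r`. -/
def blockIdx (n : ℕ → ℕ) (i : ℕ) : ℕ := sInf {r : ℕ | i ≤ n r}

/-- `r* = min{r, p−1}` for the block of `i`. -/
def rstar (p : ℕ) (n : ℕ → ℕ) (i : ℕ) : ℕ := min (blockIdx n i) (p - 1)

/-- `m(i) = m_{r*}`. -/
def mOf (p : ℕ) (n m : ℕ → ℕ) (i : ℕ) : ℕ := m (rstar p n i)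

/-- `a(i) = a_{r*}`. -/
def aOf (p : ℕ) (n : ℕ → ℕ) (a : ℕ → ℤ) (i : ℕ) : ℤ := a (rstar p n i)

/-- `n(i) = n_{r*}`. -/
def nOf (p : ℕ) (n : ℕ → ℕ) (i : ℕ) : ℕ := n (rstar p n i)

/-!
Write `H i j u = ∇^(j - aᵢ) g (u - xᵢ)`, so that `∇ H_{i,j} = H_{i,j+1}` and, for a suitable
`B ≤ A`, `H_{i,0}(B) = 0` and `H_{i,1}` vanishes below `B`. The latter confines the sum to
`B ≤ z₁ ≤ ⋯ ≤ z_N < A`. Summing out the last variable `z_N` over `[z_{N-1}, A)` turns column `N`,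
by multilinearity of the determinant, into `H_{·,N-1}(A) - H_{·,N-1}(z_{N-1})`; the second term
repeats column `N - 1` and contributes nothing. Repeating this for `z_{N-1}, …, z₁` (where the
lower end is `B` and the boundary column `H_{·,0}(B)` is zero) leaves `det[H_{i,j-1}(A)]`.
-/

section DifferenceOperators

variable {f g : ℤ → ℂ} {B L : ℤ}

theorem nabInv_eq_sum_Ico (hf : ∀ t < B, f t = 0) (u : ℤ) :
    nabInv f u = ∑ t ∈ Finset.Ico B u, f t := by
  change ∑' y : ({y : ℤ | y < u} : Set ℤ), f y = _
  rw [tsum_subtype, tsum_eq_sum (s := Finset.Ico B u)]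
  · exact Finset.sum_congr rfl fun t ht =>
      Set.indicator_of_mem (s := {y | y < u}) (Finset.mem_Ico.mp ht).2 f
  · intro t ht
    by_cases htu : t < u
    · rw [Set.indicator_of_mem (s := {y | y < u}) htu, hf t (by simpa [htu] using ht)]
    · exact Set.indicator_of_notMem (s := {y | y < u}) htu f

theorem nab_nabInv (hf : ∀ t < L, f t = 0) : nab (nabInv f) = f := by
  funext u
  have hf' : ∀ t < min L u, f t = 0 := fun t ht => hf t (lt_of_lt_of_le ht (min_le_left L u))
  rw [nab, nabInv_eq_sum_Ico hf', nabInv_eq_sum_Ico hf',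
    ← Finset.sum_Ico_add_eq_sum_Ico_add_one (min_le_right L u), add_sub_cancel_left]

theorem nab_iterate_eq_zero (hg : ∀ t < L, g t = 0) (n : ℕ) (t : ℤ) (ht : t + n < L) :
    nab^[n] g t = 0 := by
  induction n generalizing t with
  | zero => simpa using hg t (by simpa using ht)
  | succ n ih =>
    rw [Function.iterate_succ_apply', nab, ih (t + 1) (by push_cast at ht; linarith),
      ih t (by push_cast at ht; linarith), sub_zero]

theorem nabInv_iterate_eq_zero (hg : ∀ t < L, g t = 0) (n : ℕ) (t : ℤ) (ht : t < L) :
    nabInv^[n] g t = 0 := by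
  induction n generalizing t with
  | zero => exact hg t ht
  | succ n ih =>
    rw [Function.iterate_succ_apply', nabInv_eq_sum_Ico ih, Finset.Ico_eq_empty_of_le ht.le,
      Finset.sum_empty]

theorem nabIter_eq_zero (hg : ∀ t < L, g t = 0) (k t : ℤ) (ht : t + max k 0 < L) :
    nabIter k g t = 0 := by
  unfold nabIter
  split_ifs with hk
  · exact nab_iterate_eq_zero hg _ t (by omega)
  · exact nabInv_iterate_eq_zero hg _ t (by omega)

theorem nab_nabIter (hg : ∀ t < L, g t = 0) (k : ℤ) : nab (nabIter k g) = nabIter (k + 1) g := by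
  unfold nabIter
  by_cases hk : 0 ≤ k
  · rw [if_pos hk, if_pos (by omega), show (k + 1).toNat = k.toNat + 1 by omega,
      Function.iterate_succ']
    rfl
  · rw [if_neg hk, show (-k).toNat = (-(k + 1)).toNat + 1 by omega, Function.iterate_succ',
      Function.comp_apply, nab_nabInv (nabInv_iterate_eq_zero hg _)]
    split_ifs with hk'
    · rw [show (k + 1).toNat = 0 by omega, show (-(k + 1)).toNat = 0 by omega]
      rfl
    · rfl

end DifferenceOperators

section MonotoneTuples

theorem Fin.monotone_snoc_iff {α : Type*} [Preorder α] {n : ℕ} (w : Fin (n + 1) → α) (t : α) :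
    Monotone (Fin.snoc w t : Fin (n + 2) → α) ↔ Monotone w ∧ w (Fin.last n) ≤ t := by
  simp only [Fin.monotone_iff_le_succ, Fin.forall_fin_succ' (n := n), Fin.snoc_castSucc,
    Fin.succ_castSucc, Fin.succ_last, Fin.snoc_last]

variable {α : Type*} [Preorder α] [LocallyFiniteOrder α] {B A : α} {k : ℕ}

open Classical in
/-- Tuples `B ≤ z₀ ≤ ⋯ ≤ z_{k-1} < A`; the prepended `B` acts as a lower neighbour `z_{-1}`, so
that the first variable needs no special treatment. -/
def monotoneTuplesIco (B A : α) (k : ℕ) : Finset (Fin k → α) :=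
  {z ∈ Fintype.piFinset fun _ => Finset.Ico B A | Monotone (Fin.cons B z : Fin (k + 1) → α)}

theorem mem_monotoneTuplesIco_succ {n : ℕ} {z : Fin (n + 1) → α} :
    z ∈ monotoneTuplesIco B A (n + 1) ↔ Monotone z ∧ B ≤ z 0 ∧ z (Fin.last n) < A := by
  simp only [monotoneTuplesIco, Finset.mem_filter, Fintype.mem_piFinset, Finset.mem_Ico]
  rw [show Monotone (Fin.cons B z : Fin (n + 2) → α) ↔ B ≤ z 0 ∧ Monotone z from
    monotone_vecCons]
  constructor
  · rintro ⟨hz, hB, hmono⟩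
    exact ⟨hmono, hB, (hz _).2⟩
  · rintro ⟨hmono, hB, hA⟩
    exact ⟨fun i => ⟨hB.trans (hmono (Fin.zero_le i)), (hmono (Fin.le_last i)).trans_lt hA⟩,
      hB, hmono⟩

theorem snoc_mem_monotoneTuplesIco (z : Fin k → α) (t : α) :
    Fin.snoc z t ∈ monotoneTuplesIco B A (k + 1) ↔
      z ∈ monotoneTuplesIco B A k ∧
        t ∈ Finset.Ico ((Fin.cons B z : Fin (k + 1) → α) (Fin.last k)) A := by
  simp only [monotoneTuplesIco, Finset.mem_filter, Fintype.mem_piFinset, Fin.forall_fin_succ',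
    Fin.snoc_castSucc, Fin.snoc_last, Fin.cons_snoc_eq_snoc_cons, Fin.monotone_snoc_iff,
    Finset.mem_Ico]
  have hB (h : Monotone (Fin.cons B z : Fin (k + 1) → α)) :
      B ≤ (Fin.cons B z : Fin (k + 1) → α) (Fin.last k) := by
    simpa using h (Fin.zero_le (Fin.last k))
  constructor
  · rintro ⟨⟨hz, -, htA⟩, hmono, hct⟩
    exact ⟨⟨hz, hmono⟩, hct, htA⟩
  · rintro ⟨⟨hz, hmono⟩, hct, htA⟩
    exact ⟨⟨hz, (hB hmono).trans hct, htA⟩, hmono, hct⟩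

theorem cons_last_le_of_mem_monotoneTuplesIco (hBA : B ≤ A) {z : Fin k → α}
    (hz : z ∈ monotoneTuplesIco B A k) : (Fin.cons B z : Fin (k + 1) → α) (Fin.last k) ≤ A := by
  cases k with
  | zero => simpa using hBA
  | succ m => simpa using (mem_monotoneTuplesIco_succ.1 hz).2.2.le

theorem sum_monotoneTuplesIco_succ {M : Type*} [AddCommMonoid M] (f : (Fin (k + 1) → α) → M) :
    ∑ z ∈ monotoneTuplesIco B A (k + 1), f z =
      ∑ z ∈ monotoneTuplesIco B A k,
        ∑ t ∈ Finset.Ico ((Fin.cons B z : Fin (k + 1) → α) (Fin.last k)) A, f (Fin.snoc z t) := by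
  rw [Finset.sum_sigma']
  refine Finset.sum_nbij' (fun z => ⟨Fin.init z, z (Fin.last k)⟩) (fun p => Fin.snoc p.1 p.2)
    ?_ ?_ ?_ ?_ ?_
  · intro z hz
    rw [← Fin.snoc_init_self z, snoc_mem_monotoneTuplesIco] at hz
    simpa using hz
  · intro p hp
    simpa [snoc_mem_monotoneTuplesIco] using hp
  · intro z _
    simp
  · intro p _
    simp
  · intro z _
    simp

end MonotoneTuples

theorem sum_Ico_eq_sub_of_sub_eq {M : Type*} [AddCommGroup M] {f g : ℤ → M}
    (hfg : ∀ t, f (t + 1) - f t = g t) {c A : ℤ} (hcA : c ≤ A) :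
    ∑ t ∈ Finset.Ico c A, g t = f A - f c := by
  induction A, hcA using Int.leInduction with
  | base => simp
  | succ A hcA ih =>
    rw [← Finset.sum_Ico_add_eq_sum_Ico_add_one hcA, ih, ← hfg]
    abel

section PartialMatrix

variable {R : Type*} {n : ℕ} (H : Fin n → ℕ → ℤ → R) (B A : ℤ)

/-- The matrix `[H_{i,j+1}(z_j)]` of the summand once `z_k, …, z_{n-1}` have been summed out. -/
def partialMatrix (k : ℕ) (z : Fin k → ℤ) : Matrix (Fin n) (Fin n) R :=
  Matrix.of fun i j => if h : (j : ℕ) < k then H i (j + 1) (z ⟨j, h⟩) else H i j A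

theorem partialMatrix_zero (z : Fin 0 → ℤ) :
    partialMatrix H A 0 z = Matrix.of fun i (j : Fin n) => H i j A := by
  ext i j
  simp [partialMatrix]

theorem partialMatrix_self (z : Fin n → ℤ) :
    partialMatrix H A n z = Matrix.of fun i (j : Fin n) => H i (j + 1) (z j) := by
  ext i j
  simp [partialMatrix]

variable {k : ℕ} (hk : k < n)
include hk

theorem partialMatrix_snoc (z : Fin k → ℤ) (t : ℤ) :
    partialMatrix H A (k + 1) (Fin.snoc z t) =
      (partialMatrix H A k z).updateCol ⟨k, hk⟩ fun i => H i (k + 1) t := by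
  ext i j
  rw [Matrix.updateCol_apply]
  simp only [partialMatrix, Matrix.of_apply, Fin.ext_iff]
  split_ifs <;> simp_all [Fin.snoc] <;> omega

theorem updateCol_partialMatrix_self (z : Fin k → ℤ) :
    (partialMatrix H A k z).updateCol ⟨k, hk⟩ (fun i => H i k A) = partialMatrix H A k z := by
  ext i j
  rw [Matrix.updateCol_apply]
  split_ifs with hj
  · simp [partialMatrix, hj]
  · rfl

theorem det_updateCol_partialMatrix_floor [CommRing R] (h0 : ∀ i, H i 0 B = 0)
    (z : Fin k → ℤ) :
    ((partialMatrix H A k z).updateCol ⟨k, hk⟩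
      fun i => H i k ((Fin.cons B z : Fin (k + 1) → ℤ) (Fin.last k))).det = 0 := by
  cases k with
  | zero => exact Matrix.det_eq_zero_of_column_eq_zero ⟨0, hk⟩ fun i => by simp [h0]
  | succ m =>
    refine Matrix.det_zero_of_column_eq (i := ⟨m, by omega⟩) (j := ⟨m + 1, hk⟩) (by simp)
      fun i => ?_
    simp [partialMatrix]
    rfl

end PartialMatrix

section Telescoping

variable {R : Type*} [CommRing R] {n : ℕ} (H : Fin n → ℕ → ℤ → R) {B A : ℤ}
  (h0 : ∀ i, H i 0 B = 0) (hnab : ∀ i, ∀ j < n, ∀ u, H i j (u + 1) - H i j u = H i (j + 1) u)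
include h0 hnab

theorem sum_det_partialMatrix_snoc {k : ℕ} (hk : k < n) (z : Fin k → ℤ)
    (hcA : (Fin.cons B z : Fin (k + 1) → ℤ) (Fin.last k) ≤ A) :
    ∑ t ∈ Finset.Ico ((Fin.cons B z : Fin (k + 1) → ℤ) (Fin.last k)) A,
      (partialMatrix H A (k + 1) (Fin.snoc z t)).det = (partialMatrix H A k z).det := by
  set c := (Fin.cons B z : Fin (k + 1) → ℤ) (Fin.last k)
  have hcol : (∑ t ∈ Finset.Ico c A, fun i => H i (k + 1) t) =
      (fun i => H i k A) - fun i => H i k c := by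
    ext i
    simp only [Finset.sum_apply, Pi.sub_apply]
    exact sum_Ico_eq_sub_of_sub_eq (hnab i k hk) hcA
  -- `cramer P v j = det (P.updateCol j v)` is linear in `v`
  simp only [partialMatrix_snoc H A hk, ← Matrix.cramer_apply]
  rw [← Finset.sum_apply, ← map_sum, hcol, map_sub, Pi.sub_apply, Matrix.cramer_apply,
    Matrix.cramer_apply, updateCol_partialMatrix_self H A hk,
    det_updateCol_partialMatrix_floor H B A hk h0, sub_zero]

theorem sum_det_partialMatrix (hBA : B ≤ A) {k : ℕ} (hk : k ≤ n) :
    ∑ z ∈ monotoneTuplesIco B A k, (partialMatrix H A k z).det =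
      (Matrix.of fun i (j : Fin n) => H i j A).det := by
  induction k with
  | zero =>
    simp [monotoneTuplesIco, partialMatrix_zero, Subsingleton.monotone]
  | succ k ih =>
    rw [sum_monotoneTuplesIco_succ, ← ih (by omega)]
    refine Finset.sum_congr rfl fun z hz => sum_det_partialMatrix_snoc H h0 hnab (by omega) z
      (cons_last_le_of_mem_monotoneTuplesIco hBA hz)

theorem sum_det_monotoneTuplesIco (hBA : B ≤ A) :
    ∑ z ∈ monotoneTuplesIco B A n, (Matrix.of fun i (j : Fin n) => H i (j + 1) (z j)).det =
      (Matrix.of fun i (j : Fin n) => H i j A).det := by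
  simpa only [partialMatrix_self] using sum_det_partialMatrix H h0 hnab hBA le_rfl

end Telescoping

theorem tsum_subtype_eq_sum_monotoneTuplesIco {M : Type*} [AddCommMonoid M] [TopologicalSpace M]
    {n : ℕ} {B A : ℤ} (P : (Fin (n + 1) → ℤ) → Prop)
    (hP : ∀ z, P z ↔ Monotone z ∧ z (Fin.last n) < A) (F : (Fin (n + 1) → ℤ) → M)
    (hF : ∀ z, z 0 < B → F z = 0) :
    (Function.support fun z : {z // P z} => F z).Finite ∧
      ∑' z : {z // P z}, F z = ∑ z ∈ monotoneTuplesIco B A (n + 1), F z := by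
  have hsupp (z : Fin (n + 1) → ℤ) (hPz : P z) (hFz : F z ≠ 0) :
      z ∈ monotoneTuplesIco B A (n + 1) := by
    obtain ⟨hmono, hA⟩ := (hP z).1 hPz
    exact mem_monotoneTuplesIco_succ.2 ⟨hmono, not_lt.1 (mt (hF z) hFz), hA⟩
  refine ⟨((monotoneTuplesIco B A (n + 1)).finite_toSet.preimage
    Subtype.val_injective.injOn).subset fun z hz => hsupp z z.2 hz, ?_⟩
  classical
  rw [tsum_eq_sum (s := (monotoneTuplesIco B A (n + 1)).subtype P),
    Finset.sum_subtype_eq_sum_filter, Finset.filter_true_of_mem]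
  · intro z hz
    exact (hP z).2 ⟨(mem_monotoneTuplesIco_succ.1 hz).1, (mem_monotoneTuplesIco_succ.1 hz).2.2⟩
  · intro z hz
    by_contra hFz
    exact hz (Finset.mem_subtype.2 (hsupp z z.2 hFz))

theorem exists_le_forall_nabIter_eq_zero {ι : Type*} [Fintype ι] {g : ℤ → ℂ} {L : ℤ}
    (hg : ∀ t < L, g t = 0) (k x : ι → ℤ) (m : ℕ) (A : ℤ) :
    ∃ B ≤ A, ∀ i, ∀ j ≤ m, ∀ t ≤ B, nabIter (j - k i) g (t - x i) = 0 := by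
  refine ⟨min A (L - m - 1 - ∑ i, (|x i| + |k i|)), min_le_left _ _,
    fun i j hj t ht => nabIter_eq_zero hg _ _ ?_⟩
  have hi := Finset.single_le_sum (f := fun i => |x i| + |k i|) (fun i _ => by positivity)
    (Finset.mem_univ i)
  have := min_le_right A (L - m - 1 - ∑ i, (|x i| + |k i|))
  have := neg_abs_le (x i)
  have := neg_abs_le (k i)
  have := le_abs_self (k i)
  omega

theorem vcomp_succ {n : ℕ} (z : Fin (n + 1) → ℤ) : vcomp z (n + 1) = z (Fin.last n) := by
  simp [vcomp, Fin.last]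

/-- (Identity (3.5) of Lemma `lem:sbp`.)  The sum over `z ∈ W_N` with
`z_N < A` of `det[∇^{j−a_i} g(z_j − x_i)]` telescopes to `det[∇^{j−1−a_i} g(A − x_i)]`;
only finitely many terms of the sum are nonzero. -/
theorem statement3
    (N : ℕ) (hN : 1 ≤ N) (L : ℤ) (g : ℤ → ℂ)
    (hg : ∀ x : ℤ, x < L → g x = 0)
    (x : Fin N → ℤ) (a : ℕ → ℤ) (A : ℤ) :
    (Function.support (fun zv : {zv : Fin N → ℤ // Monotone zv ∧ vcomp zv N < A} =>
        Matrix.det (Matrix.of fun i j : Fin N =>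
          nabIter (((j.1 : ℤ) + 1) - a (i.1 + 1)) g (zv.1 j - x i)))).Finite
    ∧ (∑' zv : {zv : Fin N → ℤ // Monotone zv ∧ vcomp zv N < A},
        Matrix.det (Matrix.of fun i j : Fin N =>
          nabIter (((j.1 : ℤ) + 1) - a (i.1 + 1)) g (zv.1 j - x i)))
      = Matrix.det (Matrix.of fun i j : Fin N =>
          nabIter ((j.1 : ℤ) - a (i.1 + 1)) g (A - x i)) := by
  obtain ⟨n, rfl⟩ : ∃ n, N = n + 1 := ⟨N - 1, by omega⟩
  set H : Fin (n + 1) → ℕ → ℤ → ℂ := fun i j u => nabIter (j - a (i.1 + 1)) g (u - x i)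
  obtain ⟨B, hBA, hvan⟩ := exists_le_forall_nabIter_eq_zero hg (fun i => a (i.1 + 1)) x 1 A
  have hnab (i : Fin (n + 1)) (j : ℕ) (_ : j < n + 1) (u : ℤ) :
      H i j (u + 1) - H i j u = H i (j + 1) u := by
    simp only [H, show u + 1 - x i = u - x i + 1 by ring]
    rw [← nab, nab_nabIter hg]
    push_cast
    ring_nf
  have hmat (z : Fin (n + 1) → ℤ) : (Matrix.of fun i j : Fin (n + 1) =>
      nabIter (((j.1 : ℤ) + 1) - a (i.1 + 1)) g (z j - x i)) =
        Matrix.of fun i (j : Fin (n + 1)) => H i (j + 1) (z j) := by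
    ext i j
    simp [H]
  simp only [hmat]
  obtain ⟨hfin, hsum⟩ := tsum_subtype_eq_sum_monotoneTuplesIco (B := B)
    (fun z => Monotone z ∧ vcomp z (n + 1) < A) (fun z => by rw [vcomp_succ])
    (fun z => (Matrix.of fun i (j : Fin (n + 1)) => H i (j + 1) (z j)).det)
    fun z hz => Matrix.det_eq_zero_of_column_eq_zero 0 fun i => hvan i 1 le_rfl _ hz.le
  exact ⟨hfin, hsum.trans (sum_det_monotoneTuplesIco H (fun i => hvan i 0 zero_le_one B le_rfl)
    hnab hBA)⟩
end
end

section
/- Let N ≥ 1, L ∈ ℤ, and f, g : ℤ → ℂ with f(x) = g(x) = 0 for all x < L. Fix y, z ∈ ℤ^N, integer vectors a, b, c, d ∈ ℤ^N, A ∈ ℤ, and indices 1 ≤ k < ℓ ≤ N such that c_ℓ = c_{ℓ+1} whenever ℓ < N, and d_{ℓ−1} = d_ℓ − 1. Define d⁻_j = d_j − 1{j = ℓ} and c⁻_j = c_j − 1{j = ℓ}. Then ∑_{x ∈ W_N with x_k = A} det[ ∇^{d_j−a_i} f(x_j − y_i) ]_{i,j=1}^N · det[ ∇^{b_j−c_i}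 g(z_j − x_i) ]_{i,j=1}^N = ∑_{x ∈ W_N with x_k = A} det[ ∇^{d⁻_j−a_i} f(x_j − y_i) ]_{i,j=1}^N · det[ ∇^{b_j−c⁻_i} g(z_j − x_i) ]_{i,j=1}^N. -/
open MeasureTheory ProbabilityTheory Complex
open scoped Real BigOperators Nat

noncomputable section

lemma s4_nab_vl {f : ℤ → ℂ} {L : ℤ} (h : ∀ x < L, f x = 0) : ∀ x < L - 1, nab f x = 0 := by
  intro x hx
  simp only [nab, h x (by omega), h (x+1) (by omega), sub_zero]

lemma s4_nabInv_eq {f : ℤ → ℂ} {L : ℤ} (h : ∀ x < L, f x = 0) (x : ℤ) :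
    nabInv f x = ∑ y ∈ Finset.Ico L x, f y := by
  have h1 : nabInv f x = ∑' y : ℤ, ({y : ℤ | y < x}).indicator f y := tsum_subtype _ f
  rw [h1, tsum_eq_sum (s := Finset.Ico L x) ?_]
  · refine Finset.sum_congr rfl fun y hy => ?_
    rw [Finset.mem_Ico] at hy
    exact Set.indicator_of_mem (show y ∈ {y : ℤ | y < x} from hy.2) f
  · intro y hy
    rw [Finset.mem_Ico] at hy
    by_cases hyx : y < x
    · rw [Set.indicator_of_mem (show y ∈ {y : ℤ | y < x} from hyx)]
      exact h y (by omega)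
    · exact Set.indicator_of_notMem (show y ∉ {y : ℤ | y < x} from hyx) f

lemma s4_telescope' (g : ℤ → ℂ) (a : ℤ) (n : ℕ) :
    ∑ t ∈ Finset.Ico a (a+n), (g (t+1) - g t) = g (a+n) - g a := by
  induction n with
  | zero => simp
  | succ n ih =>
    have hins : Finset.Ico a (a+(n+1:ℕ)) = insert (a+n) (Finset.Ico a (a+n)) := by
      ext t; simp only [Finset.mem_Ico, Finset.mem_insert]; push_cast; omega
    rw [hins, Finset.sum_insert (by simp), ih]
    push_cast
    ring_nf

lemma s4_telescope (g : ℤ → ℂ) (a b : ℤ) (hab : a ≤ b) :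
    ∑ t ∈ Finset.Ico a b, (g (t+1) - g t) = g b - g a := by
  have hb : b = a + (b-a).toNat := by omega
  rw [hb, s4_telescope']

lemma s4_nab_nabInv {f : ℤ → ℂ} {L : ℤ} (h : ∀ x < L, f x = 0) (x : ℤ) :
    nab (nabInv f) x = f x := by
  simp only [nab, s4_nabInv_eq h]
  rcases le_or_gt L x with hLx | hLx
  · have hins : Finset.Ico L (x+1) = insert x (Finset.Ico L x) := by
      ext t; simp only [Finset.mem_Ico, Finset.mem_insert]; omega
    rw [hins, Finset.sum_insert (by simp)]
    ring
  · rw [h x hLx, Finset.Ico_eq_empty (by omega), Finset.Ico_eq_empty (by omega)]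
    simp

lemma s4_nabInv_vl {f : ℤ → ℂ} {L : ℤ} (h : ∀ x < L, f x = 0) :
    ∀ x < L, nabInv f x = 0 := by
  intro x hx
  rw [s4_nabInv_eq h, Finset.Ico_eq_empty (by omega), Finset.sum_empty]

lemma s4_nab_pow_vl {f : ℤ → ℂ} {L : ℤ} (h : ∀ x < L, f x = 0) (n : ℕ) :
    ∀ x < L - n, (nab^[n] f) x = 0 := by
  induction n with
  | zero => simpa using h
  | succ n ih =>
    intro x hx
    rw [Function.iterate_succ_apply']
    refine s4_nab_vl ih x ?_
    push_cast at hx ⊢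
    omega

lemma s4_nabInv_pow_vl {f : ℤ → ℂ} {L : ℤ} (h : ∀ x < L, f x = 0) (n : ℕ) :
    ∀ x < L, (nabInv^[n] f) x = 0 := by
  induction n with
  | zero => simpa using h
  | succ n ih =>
    intro x hx
    rw [Function.iterate_succ_apply']
    exact s4_nabInv_vl ih x hx

lemma s4_nabIter_vl {f : ℤ → ℂ} {L : ℤ} (h : ∀ x < L, f x = 0) (e : ℤ) :
    ∀ x < L - e.toNat, nabIter e f x = 0 := by
  unfold nabIter
  split
  · exact s4_nab_pow_vl h e.toNat
  · intro x hx
    exact s4_nabInv_pow_vl h _ x (by omega)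

lemma s4_nabIter_succ {f : ℤ → ℂ} {L : ℤ} (h : ∀ x < L, f x = 0) (e : ℤ) (x : ℤ) :
    nabIter (e+1) f x = nabIter e f (x+1) - nabIter e f x := by
  have key : nabIter (e+1) f x = nab (nabIter e f) x := by
    rcases le_or_gt 0 e with he | he
    · have h1 : nabIter (e+1) f = nab^[(e+1).toNat] f := if_pos (by omega)
      have h2 : nabIter e f = nab^[e.toNat] f := if_pos he
      rw [h1, h2, show (e+1).toNat = e.toNat + 1 by omega, Function.iterate_succ_apply']
    · rcases eq_or_lt_of_le (show e ≤ -1 by omega) with he1 | he1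
      · rw [he1]
        have h1 : nabIter (-1+1 : ℤ) f = f := by
          rw [show (-1+1 : ℤ) = 0 by ring]
          simp [nabIter]
        have h2 : nabIter (-1 : ℤ) f = nabInv f := by
          simp [nabIter]
        rw [h1, h2, s4_nab_nabInv h x]
      · have h1 : nabIter (e+1) f = nabInv^[(-(e+1)).toNat] f := if_neg (by omega)
        have h2 : nabIter e f = nabInv^[(-e).toNat] f := if_neg (by omega)
        rw [h1, h2, show (-e).toNat = (-(e+1)).toNat + 1 by omega,
          Function.iterate_succ_apply']
        have := s4_nabInv_pow_vl h (-(e+1)).toNat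
        exact (s4_nab_nabInv this x).symm
  rw [key]; rfl


section s4m

variable {N : ℕ} (f g : ℤ → ℂ) (y z : Fin N → ℤ) (a b : ℕ → ℤ)

/-- First determinant's matrix. -/
def s4M1 (dd : ℕ → ℤ) (x : Fin N → ℤ) : Matrix (Fin N) (Fin N) ℂ :=
  Matrix.of fun i j => nabIter (dd (j.1+1) - a (i.1+1)) f (x j - y i)

/-- Second determinant's matrix. -/
def s4M2 (cc : ℕ → ℤ) (x : Fin N → ℤ) : Matrix (Fin N) (Fin N) ℂ :=
  Matrix.of fun i j => nabIter (b (j.1+1) - cc (i.1+1)) g (z j - x i)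

variable {l : ℕ} {L : ℤ}

lemma s4_sub1 (hf : ∀ t < L, f t = 0) (hl2 : 2 ≤ l) (hlN : l ≤ N) (d : ℕ → ℤ) (x : Fin N → ℤ) :
    (s4M1 f y a d x).det
      = (s4M1 f y a (fun j => d j - if j = l then 1 else 0)
          (Function.update x ⟨l-1, by omega⟩ (x ⟨l-1, by omega⟩ + 1))).det
        - (s4M1 f y a (fun j => d j - if j = l then 1 else 0) x).det := by
  set lf : Fin N := ⟨l-1, by omega⟩ with hlf
  set d' : ℕ → ℤ := fun j => d j - if j = l then 1 else 0 with hd'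
  set M : Matrix (Fin N) (Fin N) ℂ := s4M1 f y a d' x with hM
  set v1 : Fin N → ℂ := fun i => s4M1 f y a d' (Function.update x lf (x lf + 1)) i lf with hv1
  have hlf1 : lf.1 + 1 = l := by simp only [hlf]; omega
  have h1 : s4M1 f y a d x = M.updateCol lf (v1 - fun i => M i lf) := by
    funext i j
    by_cases hj : j = lf
    · subst hj
      rw [Matrix.updateCol_self]
      simp only [hM, hv1, s4M1, Matrix.of_apply, Pi.sub_apply, Function.update_self, hd', hlf1]
      simp only [if_true]
      rw [show d l - a (i.1+1) = (d l - 1 - a (i.1+1)) + 1 by ring,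
        s4_nabIter_succ hf, show x lf + 1 - y i = (x lf - y i) + 1 by ring]
    · rw [Matrix.updateCol_ne hj]
      have hj' : ¬ (j.1 + 1 = l) := fun hc => hj (Fin.ext (by omega))
      simp only [hM, s4M1, Matrix.of_apply, hd', if_neg hj', sub_zero]
  have h2 : M.updateCol lf v1 = s4M1 f y a d' (Function.update x lf (x lf + 1)) := by
    funext i j
    by_cases hj : j = lf
    · subst hj; rw [Matrix.updateCol_self]
    · rw [Matrix.updateCol_ne hj]
      simp only [hM, s4M1, Matrix.of_apply, Function.update_of_ne hj]
  have h3 : (M.updateCol lf v1).det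
      = (M.updateCol lf fun i => M i lf).det
        + (M.updateCol lf (v1 - fun i => M i lf)).det := by
    conv_lhs => rw [show v1 = (fun i => M i lf) + (v1 - fun i => M i lf) by
      funext i; simp]
    exact Matrix.det_updateCol_add M lf _ _
  rw [h1]
  rw [h2, Matrix.updateCol_eq_self] at h3
  linear_combination -h3

lemma s4_sub2 (hg : ∀ t < L, g t = 0) (hl2 : 2 ≤ l) (hlN : l ≤ N) (c : ℕ → ℤ) (x : Fin N → ℤ) :
    (s4M2 g z b (fun i => c i - if i = l then 1 else 0) x).det
      = (s4M2 g z b c (Function.update x ⟨l-1, by omega⟩ (x ⟨l-1, by omega⟩ - 1))).det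
        - (s4M2 g z b c x).det := by
  set lf : Fin N := ⟨l-1, by omega⟩ with hlf
  set c' : ℕ → ℤ := fun i => c i - if i = l then 1 else 0 with hc'
  set M : Matrix (Fin N) (Fin N) ℂ := s4M2 g z b c x with hM
  set w1 : Fin N → ℂ := fun j => s4M2 g z b c (Function.update x lf (x lf - 1)) lf j with hw1
  have hlf1 : lf.1 + 1 = l := by simp only [hlf]; omega
  have h1 : s4M2 g z b c' x = M.updateRow lf (w1 - fun j => M lf j) := by
    funext i j
    by_cases hi : i = lf
    · subst hi
      rw [Matrix.updateRow_self]
      simp only [hM, hw1, s4M2, Matrix.of_apply, Pi.sub_apply, Function.update_self, hc', hlf1]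
      simp only [if_true]
      rw [show b (j.1+1) - (c l - 1) = (b (j.1+1) - c l) + 1 by ring,
        s4_nabIter_succ hg, show z j - (x lf - 1) = (z j - x lf) + 1 by ring]
    · rw [Matrix.updateRow_ne hi]
      have hi' : ¬ (i.1 + 1 = l) := fun hc => hi (Fin.ext (by omega))
      simp only [hM, s4M2, Matrix.of_apply, hc', if_neg hi', sub_zero]
  have h2 : M.updateRow lf w1 = s4M2 g z b c (Function.update x lf (x lf - 1)) := by
    funext i j
    by_cases hi : i = lf
    · subst hi; rw [Matrix.updateRow_self]
    · rw [Matrix.updateRow_ne hi]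
      simp only [hM, s4M2, Matrix.of_apply, Function.update_of_ne hi]
  have h3 : (M.updateRow lf w1).det
      = (M.updateRow lf (M lf)).det + (M.updateRow lf (w1 - M lf)).det := by
    conv_lhs => rw [show w1 = (M lf) + (w1 - M lf) by funext j; simp]
    exact Matrix.det_updateRow_add M lf _ _
  have h4 : (w1 - fun j => M lf j) = w1 - M lf := rfl
  rw [h1, h4]
  rw [h2, Matrix.updateRow_eq_self] at h3
  linear_combination -h3

lemma s4_Z1 (hl2 : 2 ≤ l) (hlN : l ≤ N) (d : ℕ → ℤ) (hd : d (l-1) = d l - 1)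
    (x : Fin N → ℤ) (hx : x ⟨l-2, by omega⟩ = x ⟨l-1, by omega⟩) :
    (s4M1 f y a (fun j => d j - if j = l then 1 else 0) x).det = 0 := by
  apply Matrix.det_zero_of_column_eq
    (show (⟨l-2, by omega⟩ : Fin N) ≠ ⟨l-1, by omega⟩ from by
      simp only [ne_eq, Fin.mk.injEq]; omega)
  intro i
  simp only [s4M1, Matrix.of_apply]
  have e1 : (⟨l-2, by omega⟩ : Fin N).1 + 1 = l - 1 := by simp; omega
  have e2 : (⟨l-1, by omega⟩ : Fin N).1 + 1 = l := by simp; omega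
  rw [e1, e2, hx, if_neg (by omega : ¬ (l - 1 = l)), if_pos rfl, hd]
  norm_num

lemma s4_Z2 (hl2 : 2 ≤ l) (hlN : l < N) (c : ℕ → ℤ) (hc : c l = c (l+1))
    (x : Fin N → ℤ) (hx : x ⟨l-1, by omega⟩ = x ⟨l, by omega⟩) :
    (s4M2 g z b c x).det = 0 := by
  apply Matrix.det_zero_of_row_eq
    (show (⟨l-1, by omega⟩ : Fin N) ≠ ⟨l, by omega⟩ from by
      simp only [ne_eq, Fin.mk.injEq]; omega)
  funext j
  simp only [s4M2, Matrix.of_apply]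
  have e1 : (⟨l-1, by omega⟩ : Fin N).1 + 1 = l := by simp; omega
  have e2 : (⟨l, by omega⟩ : Fin N).1 + 1 = l + 1 := by simp
  rw [e1, e2, hx, hc]

lemma s4_Z3 (hN : 1 ≤ N) (hf : ∀ t < L, f t = 0) (dd : ℕ → ℤ) :
    ∃ B : ℤ, ∀ x : Fin N → ℤ, x ⟨0, by omega⟩ < B → (s4M1 f y a dd x).det = 0 := by
  haveI : Nonempty (Fin N) := ⟨⟨0, by omega⟩⟩
  refine ⟨Finset.univ.inf' Finset.univ_nonempty
    (fun i : Fin N => L - ((dd 1 - a (i.1+1)).toNat : ℤ) + y i), fun x hx => ?_⟩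
  apply Matrix.det_eq_zero_of_column_eq_zero ⟨0, by omega⟩
  intro i
  simp only [s4M1, Matrix.of_apply]
  have e1 : (⟨0, by omega⟩ : Fin N).1 + 1 = 1 := by simp
  rw [e1]
  apply s4_nabIter_vl hf
  have hle := Finset.inf'_le (b := i)
    (fun i : Fin N => L - ((dd 1 - a (i.1+1)).toNat : ℤ) + y i) (Finset.mem_univ i)
  omega

lemma s4_Z4 (hN : 1 ≤ N) (hg : ∀ t < L, g t = 0) (cc : ℕ → ℤ) :
    ∃ B : ℤ, ∀ x : Fin N → ℤ, B < x ⟨N-1, by omega⟩ → (s4M2 g z b cc x).det = 0 := by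
  haveI : Nonempty (Fin N) := ⟨⟨0, by omega⟩⟩
  refine ⟨Finset.univ.sup' Finset.univ_nonempty
    (fun j : Fin N => z j - L + ((b (j.1+1) - cc N).toNat : ℤ)), fun x hx => ?_⟩
  apply Matrix.det_eq_zero_of_row_eq_zero ⟨N-1, by omega⟩
  intro j
  simp only [s4M2, Matrix.of_apply]
  have e1 : (⟨N-1, by omega⟩ : Fin N).1 + 1 = N := by simp; omega
  rw [e1]
  apply s4_nabIter_vl hg
  have hle := Finset.le_sup' (b := j)
    (fun j : Fin N => z j - L + ((b (j.1+1) - cc N).toNat : ℤ)) (Finset.mem_univ j)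
  omega

end s4m

lemma s4_summable {N : ℕ} (hN : 1 ≤ N) {p : (Fin N → ℤ) → Prop} (F : (Fin N → ℤ) → ℂ) (B1 B2 : ℤ)
    (hF : ∀ x : Fin N → ℤ, Monotone x →
      (x ⟨0, by omega⟩ < B1 ∨ B2 < x ⟨N-1, by omega⟩) → F x = 0) :
    Summable (fun u : {x : Fin N → ℤ // Monotone x ∧ p x} => F u.1) := by
  classical
  set S : Set {x : Fin N → ℤ // Monotone x ∧ p x} :=
    {u | ∀ i, u.1 i ∈ Set.Icc B1 B2} with hS
  have hfin : S.Finite := by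
    haveI : Finite (Set.Icc B1 B2) := (Set.finite_Icc B1 B2).to_subtype
    have hinj : Function.Injective
        (fun (u : S) (i : Fin N) => (⟨u.1.1 i, u.2 i⟩ : Set.Icc B1 B2)) := by
      intro u v huv
      apply Subtype.ext; apply Subtype.ext; funext i
      exact congrArg Subtype.val (congrFun huv i)
    haveI := Finite.of_injective _ hinj
    exact S.toFinite
  apply summable_of_ne_finset_zero (s := hfin.toFinset)
  intro u hu
  rw [Set.Finite.mem_toFinset] at hu
  simp only [hS, Set.mem_setOf_eq, not_forall] at hu
  obtain ⟨i, hi⟩ := hu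
  rw [Set.mem_Icc] at hi
  have m1 : u.1 ⟨0, by omega⟩ ≤ u.1 i := u.2.1 (by simp [Fin.le_def])
  have m2 : u.1 i ≤ u.1 ⟨N-1, by omega⟩ := by
    apply u.2.1
    rw [Fin.le_def]
    show i.1 ≤ N - 1
    have := i.2
    omega
  exact hF u.1 u.2.1 (by omega)

section s4mono

variable {N l : ℕ}

lemma s4_mono_up (hl2 : 2 ≤ l) (hlN : l ≤ N) (x : Fin N → ℤ) (hm : Monotone x)
    (hstrict : ∀ hlt : l < N, x ⟨l-1, by omega⟩ < x ⟨l, hlt⟩) :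
    Monotone (Function.update x ⟨l-1, by omega⟩ (x ⟨l-1, by omega⟩ + 1)) := by
  set lf : Fin N := ⟨l-1, by omega⟩ with hlf
  intro i j hij
  by_cases hj : j = lf
  · rw [hj, Function.update_self]
    by_cases hi : i = lf
    · rw [hi, Function.update_self]
    · rw [Function.update_of_ne hi]
      have : x i ≤ x lf := hm (hj ▸ hij)
      omega
  · rw [Function.update_of_ne hj]
    by_cases hi : i = lf
    · rw [hi, Function.update_self]
      have hij' : lf ≤ j := hi ▸ hij
      have hj1 : j.1 ≠ l - 1 := fun hc => hj (Fin.ext (by simp [hlf, hc]))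
      have hjl : l ≤ j.1 := by
        have := hij'
        rw [Fin.le_def] at this
        simp only [hlf] at this
        omega
      have hlt : l < N := by have := j.2; omega
      have hstep : x lf + 1 ≤ x ⟨l, hlt⟩ := hstrict hlt
      have hrest : x ⟨l, hlt⟩ ≤ x j := hm (by rw [Fin.le_def]; exact hjl)
      omega
    · rw [Function.update_of_ne hi]; exact hm hij

lemma s4_mono_down (hl2 : 2 ≤ l) (hlN : l ≤ N) (x : Fin N → ℤ) (hm : Monotone x)
    (hstrict : x ⟨l-2, by omega⟩ < x ⟨l-1, by omega⟩) :
    Monotone (Function.update x ⟨l-1, by omega⟩ (x ⟨l-1, by omega⟩ - 1)) := by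
  set lf : Fin N := ⟨l-1, by omega⟩ with hlf
  intro i j hij
  by_cases hj : j = lf
  · rw [hj, Function.update_self]
    by_cases hi : i = lf
    · rw [hi, Function.update_self]
    · rw [Function.update_of_ne hi]
      have hi1 : i.1 ≠ l - 1 := fun hc => hi (Fin.ext (by simp [hlf, hc]))
      have hile : i.1 ≤ l - 1 := by
        have := hj ▸ hij
        rw [Fin.le_def] at this
        simpa [hlf] using this
      have hi2 : i ≤ (⟨l-2, by omega⟩ : Fin N) := by
        rw [Fin.le_def]
        simp only []
        omega
      have h1 : x i ≤ x ⟨l-2, by omega⟩ := hm hi2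
      omega
  · rw [Function.update_of_ne hj]
    by_cases hi : i = lf
    · rw [hi, Function.update_self]
      have : x lf ≤ x j := hm (hi ▸ hij)
      omega
    · rw [Function.update_of_ne hi]; exact hm hij

end s4mono


set_option maxHeartbeats 1000000 in
/-- (Identity (3.6) of Lemma `lem:sbp`.)  A single derivative may be
moved from column `ℓ` of the first determinant to the second one, in the sum over
`x ∈ W_N` with `x_k = A`, provided `c_ℓ = c_{ℓ+1}` (when `ℓ < N`) and `d_{ℓ−1} = d_ℓ − 1`. -/
theorem statement4
    (N : ℕ) (hN : 1 ≤ N) (L : ℤ) (f g : ℤ → ℂ)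
    (hf : ∀ x : ℤ, x < L → f x = 0) (hg : ∀ x : ℤ, x < L → g x = 0)
    (y z : Fin N → ℤ) (a b c d : ℕ → ℤ) (A : ℤ)
    (k l : ℕ) (hk1 : 1 ≤ k) (hkl : k < l) (hlN : l ≤ N)
    (hc : l < N → c l = c (l + 1)) (hd : d (l - 1) = d l - 1) :
    (∑' x : {x : Fin N → ℤ // Monotone x ∧ vcomp x k = A},
        Matrix.det (Matrix.of fun i j : Fin N =>
          nabIter (d (j.1 + 1) - a (i.1 + 1)) f (x.1 j - y i))
        * Matrix.det (Matrix.of fun i j : Fin N =>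
          nabIter (b (j.1 + 1) - c (i.1 + 1)) g (z j - x.1 i)))
      = ∑' x : {x : Fin N → ℤ // Monotone x ∧ vcomp x k = A},
        Matrix.det (Matrix.of fun i j : Fin N =>
          nabIter ((d (j.1 + 1) - (if j.1 + 1 = l then 1 else 0)) - a (i.1 + 1)) f
            (x.1 j - y i))
        * Matrix.det (Matrix.of fun i j : Fin N =>
          nabIter (b (j.1 + 1) - (c (i.1 + 1) - (if i.1 + 1 = l then 1 else 0))) g
            (z j - x.1 i)) := by
  classical
  have hf' : ∀ t < L, f t = 0 := fun t ht => hf t ht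
  have hg' : ∀ t < L, g t = 0 := fun t ht => hg t ht
  have hl2 : 2 ≤ l := by omega
  have hL : l - 1 < N := by omega
  set lf : Fin N := ⟨l - 1, hL⟩ with hlf
  set d' : ℕ → ℤ := fun j => d j - if j = l then 1 else 0 with hd'
  set c' : ℕ → ℤ := fun i => c i - if i = l then 1 else 0 with hc'
  set H : (Fin N → ℤ) → ℂ :=
    fun x => (s4M1 f y a d' x).det
      * (s4M2 g z b c (Function.update x lf (x lf - 1))).det with hH
  -- collapsing an up-update followed by a down-update
  have hcol : ∀ x : Fin N → ℤ,
      Function.update (Function.update x lf (x lf + 1)) lf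
        ((Function.update x lf (x lf + 1)) lf - 1) = x := by
    intro x
    funext i
    by_cases hi : i = lf
    · rw [hi, Function.update_self, Function.update_self]
      ring
    · rw [Function.update_of_ne hi, Function.update_of_ne hi]
  have hHσ : ∀ x : Fin N → ℤ, H (Function.update x lf (x lf + 1))
      = (s4M1 f y a d' (Function.update x lf (x lf + 1))).det
        * (s4M2 g z b c x).det := by
    intro x
    simp only [hH]
    rw [hcol x]
  -- pointwise summation-by-parts identity
  have hpt : ∀ x : Fin N → ℤ,
      (s4M1 f y a d x).det * (s4M2 g z b c x).det
        = (s4M1 f y a d' x).det * (s4M2 g z b c' x).det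
          + (H (Function.update x lf (x lf + 1)) - H x) := by
    intro x
    have h1 := s4_sub1 f y a hf' hl2 hlN d x
    have h2 := s4_sub2 g z b hg' hl2 hlN c x
    rw [hHσ x]
    simp only [hH, hd', hc']
    rw [h1, h2]
    ring
  -- bounds for the supports
  obtain ⟨BL, hBL⟩ := s4_Z3 f y a hN hf' d'
  obtain ⟨B2, hB2⟩ := s4_Z4 g z b hN hg' c'
  obtain ⟨B3, hB3⟩ := s4_Z4 g z b hN hg' c
  set BR : ℤ := max B2 B3 + 2 with hBR
  have hup : ∀ (x : Fin N → ℤ) (i : Fin N),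
      x i ≤ Function.update x lf (x lf + 1) i ∧
      Function.update x lf (x lf + 1) i ≤ x i + 1 := by
    intro x i
    by_cases hi : i = lf
    · rw [hi, Function.update_self]; omega
    · rw [Function.update_of_ne hi]; omega
  have hdown : ∀ (x : Fin N → ℤ) (i : Fin N),
      x i - 1 ≤ Function.update x lf (x lf - 1) i ∧
      Function.update x lf (x lf - 1) i ≤ x i := by
    intro x i
    by_cases hi : i = lf
    · rw [hi, Function.update_self]; omega
    · rw [Function.update_of_ne hi]; omega
  have hT2zero : ∀ x : Fin N → ℤ,
      (x ⟨0, by omega⟩ < BL ∨ BR < x ⟨N-1, by omega⟩) →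
      (s4M1 f y a d' x).det * (s4M2 g z b c' x).det = 0 := by
    intro x hx
    rcases hx with hx | hx
    · rw [hBL x hx, zero_mul]
    · rw [hB2 x (by omega), mul_zero]
  have hHzero : ∀ x : Fin N → ℤ,
      (x ⟨0, by omega⟩ < BL ∨ BR < x ⟨N-1, by omega⟩) → H x = 0 := by
    intro x hx
    simp only [hH]
    rcases hx with hx | hx
    · rw [hBL x hx, zero_mul]
    · have hb : B3 < Function.update x lf (x lf - 1) ⟨N-1, by omega⟩ := by
        have := (hdown x ⟨N-1, by omega⟩).1
        omega
      rw [hB3 _ hb, mul_zero]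
  have hHσzero : ∀ x : Fin N → ℤ,
      (x ⟨0, by omega⟩ < BL ∨ BR + 1 < x ⟨N-1, by omega⟩) →
      H (Function.update x lf (x lf + 1)) = 0 := by
    intro x hx
    apply hHzero
    rcases hx with hx | hx
    · left
      have h0 : (⟨0, by omega⟩ : Fin N) ≠ lf := by
        intro hcc
        have := congrArg Fin.val hcc
        simp only [hlf] at this
        omega
      rw [Function.update_of_ne h0]
      exact hx
    · right
      have := (hup x ⟨N-1, by omega⟩).1
      omega
  -- summability
  have sT2 : Summable (fun u : {x : Fin N → ℤ // Monotone x ∧ vcomp x k = A} =>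
      (s4M1 f y a d' u.1).det * (s4M2 g z b c' u.1).det) :=
    s4_summable hN (fun x => (s4M1 f y a d' x).det * (s4M2 g z b c' x).det) BL BR
      (fun x _ hx => hT2zero x hx)
  have sH : Summable (fun u : {x : Fin N → ℤ // Monotone x ∧ vcomp x k = A} =>
      H u.1) :=
    s4_summable hN H BL BR (fun x _ hx => hHzero x hx)
  have sHσ : Summable (fun u : {x : Fin N → ℤ // Monotone x ∧ vcomp x k = A} =>
      H (Function.update u.1 lf (u.1 lf + 1))) :=
    s4_summable hN (fun x => H (Function.update x lf (x lf + 1))) BL (BR+1)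
      (fun x _ hx => hHσzero x hx)
  -- vcomp preservation
  have hkn : k - 1 < N := by omega
  have hkne : (⟨k-1, hkn⟩ : Fin N) ≠ lf := by
    intro hcc
    have := congrArg Fin.val hcc
    simp only [hlf] at this
    omega
  have hvc_up : ∀ x : Fin N → ℤ, vcomp x k = A →
      vcomp (Function.update x lf (x lf + 1)) k = A := by
    intro x hx
    unfold vcomp at hx ⊢
    rw [dif_pos hkn] at hx ⊢
    rw [Function.update_of_ne hkne]
    exact hx
  have hvc_down : ∀ x : Fin N → ℤ, vcomp x k = A →
      vcomp (Function.update x lf (x lf - 1)) k = A := by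
    intro x hx
    unfold vcomp at hx ⊢
    rw [dif_pos hkn] at hx ⊢
    rw [Function.update_of_ne hkne]
    exact hx
  -- membership preservation under the up-shift, on the support of H∘σ
  have hmemI : ∀ x : Fin N → ℤ, (Monotone x ∧ vcomp x k = A) →
      H (Function.update x lf (x lf + 1)) ≠ 0 →
      Monotone (Function.update x lf (x lf + 1)) ∧
        vcomp (Function.update x lf (x lf + 1)) k = A := by
    intro x hxI hne
    refine ⟨?_, hvc_up x hxI.2⟩
    apply s4_mono_up hl2 hlN x hxI.1
    intro hlt
    have hle : x ⟨l-1, by omega⟩ ≤ x ⟨l, hlt⟩ := by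
      apply hxI.1
      rw [Fin.le_def]
      simp only []
      omega
    rcases lt_or_eq_of_le hle with hlt2 | heq
    · exact hlt2
    · exfalso
      apply hne
      rw [hHσ x, s4_Z2 g z b hl2 hlt c (hc hlt) x heq, mul_zero]
  -- the shift bijection on supports
  have hbij : (∑' u : {x : Fin N → ℤ // Monotone x ∧ vcomp x k = A}, H u.1)
      = ∑' u : {x : Fin N → ℤ // Monotone x ∧ vcomp x k = A},
          H (Function.update u.1 lf (u.1 lf + 1)) := by
    apply tsum_eq_tsum_of_ne_zero_bij
      (i := fun u => ⟨Function.update u.1.1 lf (u.1.1 lf + 1),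
        hmemI u.1.1 u.1.2 u.2⟩)
    · intro u v huv
      apply Subtype.ext
      apply Subtype.ext
      have h0 : Function.update u.1.1 lf (u.1.1 lf + 1)
          = Function.update v.1.1 lf (v.1.1 lf + 1) := congrArg Subtype.val huv
      funext i0
      by_cases hi : i0 = lf
      · have h1 := congrFun h0 lf
        rw [Function.update_self, Function.update_self] at h1
        rw [hi]
        omega
      · have h1 := congrFun h0 i0
        rw [Function.update_of_ne hi, Function.update_of_ne hi] at h1
        exact h1
    · intro u hu
      have hne : H u.1 ≠ 0 := hu
      have hstrict : u.1 ⟨l-2, by omega⟩ < u.1 ⟨l-1, by omega⟩ := by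
        have hle : u.1 ⟨l-2, by omega⟩ ≤ u.1 ⟨l-1, by omega⟩ := by
          apply u.2.1
          rw [Fin.le_def]
          simp only []
          omega
        rcases lt_or_eq_of_le hle with h | h
        · exact h
        · exfalso
          apply hne
          simp only [hH, hd']
          rw [s4_Z1 f y a hl2 hlN d hd u.1 h, zero_mul]
      have hσv : Function.update (Function.update u.1 lf (u.1 lf - 1)) lf
          ((Function.update u.1 lf (u.1 lf - 1)) lf + 1) = u.1 := by
        funext i0
        by_cases hi : i0 = lf
        · rw [hi, Function.update_self, Function.update_self]
          ring
        · rw [Function.update_of_ne hi, Function.update_of_ne hi]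
      have hvI : Monotone (Function.update u.1 lf (u.1 lf - 1)) ∧
          vcomp (Function.update u.1 lf (u.1 lf - 1)) k = A :=
        ⟨s4_mono_down hl2 hlN u.1 u.2.1 hstrict, hvc_down u.1 u.2.2⟩
      have hvsupp : H (Function.update (Function.update u.1 lf (u.1 lf - 1)) lf
          ((Function.update u.1 lf (u.1 lf - 1)) lf + 1)) ≠ 0 := by
        rw [hσv]
        exact hne
      exact ⟨⟨⟨Function.update u.1 lf (u.1 lf - 1), hvI⟩, hvsupp⟩, Subtype.ext hσv⟩
    · intro u
      rfl
  -- assemble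
  have main : (∑' u : {x : Fin N → ℤ // Monotone x ∧ vcomp x k = A},
        (s4M1 f y a d u.1).det * (s4M2 g z b c u.1).det)
      = ∑' u : {x : Fin N → ℤ // Monotone x ∧ vcomp x k = A},
        (s4M1 f y a d' u.1).det * (s4M2 g z b c' u.1).det := by
    calc ∑' u : {x : Fin N → ℤ // Monotone x ∧ vcomp x k = A},
          (s4M1 f y a d u.1).det * (s4M2 g z b c u.1).det
        = ∑' u : {x : Fin N → ℤ // Monotone x ∧ vcomp x k = A},
            ((s4M1 f y a d' u.1).det * (s4M2 g z b c' u.1).det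
              + (H (Function.update u.1 lf (u.1 lf + 1)) - H u.1)) :=
          tsum_congr fun u => hpt u.1
      _ = (∑' u : {x : Fin N → ℤ // Monotone x ∧ vcomp x k = A},
            (s4M1 f y a d' u.1).det * (s4M2 g z b c' u.1).det)
            + ∑' u : {x : Fin N → ℤ // Monotone x ∧ vcomp x k = A},
                (H (Function.update u.1 lf (u.1 lf + 1)) - H u.1) :=
          Summable.tsum_add sT2 (sHσ.sub sH)
      _ = (∑' u : {x : Fin N → ℤ // Monotone x ∧ vcomp x k = A},
            (s4M1 f y a d' u.1).det * (s4M2 g z b c' u.1).det)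
            + ((∑' u : {x : Fin N → ℤ // Monotone x ∧ vcomp x k = A},
                H (Function.update u.1 lf (u.1 lf + 1)))
              - ∑' u : {x : Fin N → ℤ // Monotone x ∧ vcomp x k = A}, H u.1) := by
          rw [Summable.tsum_sub sHσ sH]
      _ = ∑' u : {x : Fin N → ℤ // Monotone x ∧ vcomp x k = A},
            (s4M1 f y a d' u.1).det * (s4M2 g z b c' u.1).det := by
          rw [← hbij]
          ring
  exact main

end
end

section
/- For every integer m ≥ 1, every n ∈ ℤ, every x ∈ ℤ, and every radius r > 1, ∇^n w_m(x) = (−1)^{n−1} ∮_{γ_r(1)} G*(z | n, m, x−1) dz. -/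
open MeasureTheory ProbabilityTheory Complex
open scoped Real BigOperators Nat

noncomputable section

/-!
Both sides obey the same recursion in `n`. On the circle, `G*(z | n, m, a + 1) - G*(z | n, m, a)
= -G*(z | n + 1, m, a)`, which matches `∇`; and since `|1 - z| = r > 1`, the geometric series
`∑_{k ≥ 0} G*(z | n, m, a - k) = -G*(z | n - 1, m, a + 1)` converges uniformly, which matches `∇⁻¹`.
At `n = 0`, substituting `t = 1 / (1 - z)` turns `G*(z | 0, m, a)` into the generating function
`((1 - q) / (1 - q t))^m = ∑ⱼ w_m(j) tʲ` of the negative binomial law, so `G*(z | 0, m, x - 1)` has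
the Laurent expansion `∑ⱼ w_m(j) (1 - z)^(x - 1 - j)` and its integral picks out `-w_m(x)`.
-/

open Metric Set Filter

section CircleIntegral

variable {E : Type*} [NormedAddCommGroup E] [NormedSpace ℂ E]

theorem circleIntegral.hasSum_of_norm_le {ι : Type*} [Countable ι] {f : ι → ℂ → E}
    {g : ℂ → E} {c : ℂ} {R : ℝ} {C : ι → ℝ} (hf : ∀ i, CircleIntegrable (f i) c R)
    (hR : 0 ≤ R) (hC : Summable C) (hfC : ∀ i, ∀ z ∈ sphere c R, ‖f i z‖ ≤ C i)
    (hfg : ∀ z ∈ sphere c R, HasSum (fun i => f i z) (g z)) :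
    HasSum (fun i => ∮ z in C(c, R), f i z) (∮ z in C(c, R), g z) := by
  refine intervalIntegral.hasSum_integral_of_dominated_convergence (fun i _ => |R| * C i)
    (fun i => ?_) (fun i => ?_) ?_ intervalIntegrable_const ?_
  · exact ((intervalIntegrable_iff.1 (hf i).out).aestronglyMeasurable)
  · refine Eventually.of_forall fun θ _ => ?_
    rw [deriv_circleMap, norm_smul, norm_mul, norm_circleMap_zero, norm_I, mul_one]
    exact mul_le_mul_of_nonneg_left (hfC i _ (circleMap_mem_sphere c hR θ)) (abs_nonneg R)
  · exact Eventually.of_forall fun _ _ => hC.mul_left _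
  · exact Eventually.of_forall fun θ _ => (hfg _ (circleMap_mem_sphere c hR θ)).const_smul _

end CircleIntegral

theorem circleIntegral_center_sub_zpow {c : ℂ} {R : ℝ} (hR : 0 < R) (k : ℤ) :
    (∮ z in C(c, R), (c - z) ^ k) = if k = -1 then -(2 * π * I) else 0 := by
  have hneg : ∀ z : ℂ, (c - z) ^ k = (-1) ^ k * (z - c) ^ k := fun z => by
    rw [← mul_zpow, neg_one_mul, neg_sub]
  simp only [hneg, circleIntegral.integral_const_mul]
  split_ifs with hk
  · simp only [hk, zpow_neg_one]
    rw [circleIntegral.integral_sub_inv_of_mem_ball (mem_ball_self hR)]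
    ring
  · rw [circleIntegral.integral_sub_zpow_of_ne hk, mul_zero]

theorem cint_const_mul (a : ℂ) (f : ℂ → ℂ) (c : ℂ) (R : ℝ) :
    cint c R (fun z => a * f z) = a * cint c R f := by
  simp only [cint, circleIntegral.integral_const_mul]
  ring

theorem cint_center_sub_zpow {c : ℂ} {R : ℝ} (hR : 0 < R) (k : ℤ) :
    cint c R (fun z => (c - z) ^ k) = if k = -1 then -1 else 0 := by
  have h2πI : (2 * π * I : ℂ) ≠ 0 := by simp [Real.pi_ne_zero]
  rw [cint, circleIntegral_center_sub_zpow hR]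
  split_ifs
  · field_simp
  · simp

theorem wgt_natCast (q : ℝ) (m j : ℕ) :
    wgt q m j = ((j + m - 1).choose j : ℂ) * (1 - q) ^ m * q ^ j := by
  simp [wgt]

theorem hasSum_wgt_mul_pow {q : ℝ} (m : ℕ) {t : ℂ} (ht : ‖(q : ℂ) * t‖ < 1) :
    HasSum (fun j : ℕ => wgt q m j * t ^ j) (((1 - q) / (1 - q * t)) ^ m) := by
  cases m with
  | zero =>
    -- `w_0` is the point mass at `0`: `(j - 1).choose j` vanishes for `j > 0`.
    convert hasSum_single (f := fun j : ℕ => wgt q 0 j * t ^ j) 0 fun j hj => ?_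
    · simp [wgt]
    · rw [wgt_natCast, Nat.choose_eq_zero_of_lt (by omega)]
      simp
  | succ k =>
    rw [div_pow, div_eq_mul_one_div]
    refine ((hasSum_choose_mul_geometric_of_norm_lt_one k ht).mul_left _).congr_fun fun j => ?_
    rw [wgt_natCast, show j + (k + 1) - 1 = j + k by omega, Nat.choose_symm_add, mul_pow]
    ring

namespace Gstar

variable {q r : ℝ} {n m a : ℤ} {z : ℂ}

theorem add_one_sub (hz₀ : z ≠ 0) (hz₁ : z ≠ 1) :
    Gstar q n m (a + 1) z - Gstar q n m a z = -Gstar q (n + 1) m a z := by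
  have h : 1 - z ≠ 0 := sub_ne_zero.2 hz₁.symm
  simp only [Gstar]
  rw [add_right_comm, zpow_add_one₀ h, zpow_add_one₀ hz₀]
  ring

theorem sub_natCast (hz₁ : 1 - z ≠ 0) (k : ℕ) :
    Gstar q n m (a - k) z = Gstar q n m a z * (1 - z)⁻¹ ^ k := by
  simp only [Gstar]
  rw [sub_add_eq_add_sub, zpow_sub₀ hz₁, zpow_natCast, inv_pow]
  ring

theorem hasSum_sub_natCast (hz₀ : z ≠ 0) (hz : 1 < ‖1 - z‖) :
    HasSum (fun k : ℕ => Gstar q n m (a - k) z) (-Gstar q (n - 1) m (a + 1) z) := by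
  have h : 1 - z ≠ 0 := norm_pos_iff.1 (one_pos.trans hz)
  have hinv : ‖(1 - z)⁻¹‖ < 1 := by rw [norm_inv]; exact inv_lt_one_of_one_lt₀ hz
  have hsum : -Gstar q (n - 1) m (a + 1) z = Gstar q n m a z * (1 - (1 - z)⁻¹)⁻¹ := by
    have h' : 1 - (1 - z)⁻¹ = -z / (1 - z) := by field_simp; ring
    simp only [Gstar]
    rw [h', add_right_comm, zpow_add_one₀ h, zpow_sub_one₀ hz₀]
    field_simp
  rw [hsum]
  exact ((hasSum_geometric_of_norm_lt_one hinv).mul_left _).congr_fun fun k => sub_natCast h k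

theorem hasSum_wgt_mul_one_sub_zpow (m : ℕ) (hq₁ : q ≠ 1) (hz : |q| < ‖1 - z‖) (a : ℤ) :
    HasSum (fun j : ℕ => wgt q m j * (1 - z) ^ (a - j)) (Gstar q 0 m a z) := by
  have h : 1 - z ≠ 0 := norm_pos_iff.1 ((abs_nonneg q).trans_lt hz)
  have hq : (1 : ℂ) - q ≠ 0 := sub_ne_zero.2 (by exact_mod_cast hq₁.symm)
  have hqz : ‖(q : ℂ) * (1 - z)⁻¹‖ < 1 := by
    rwa [norm_mul, norm_inv, Complex.norm_real, Real.norm_eq_abs, ← div_eq_mul_inv,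
      div_lt_one (norm_pos_iff.2 h)]
  have hqz' : 1 - q - z ≠ 0 := by
    intro h'
    rw [show 1 - z = q by linear_combination h', Complex.norm_real, Real.norm_eq_abs] at hz
    exact lt_irrefl _ hz
  have hsum : Gstar q 0 m a z = (1 - z) ^ a * ((1 - q) / (1 - q * (1 - z)⁻¹)) ^ m := by
    simp only [Gstar, zpow_zero, one_mul]
    rw [zpow_add₀ h, zpow_natCast, zpow_natCast, mul_div_assoc, ← div_pow]
    congr 2
    field_simp
    rw [eq_div_iff (by rwa [sub_right_comm] at hqz'), one_mul, sub_right_comm]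
  rw [hsum]
  refine ((hasSum_wgt_mul_pow m hqz).mul_left _).congr_fun fun j => ?_
  rw [zpow_sub₀ h, zpow_natCast, inv_pow]
  ring

theorem continuousAt (hq₁ : q ≠ 1) (hz₀ : z ≠ 0) (hz₁ : z ≠ 1) (hzq : z ≠ 1 - q) :
    ContinuousAt (Gstar q n m a) z := by
  have hq : (1 : ℂ) - q ≠ 0 := sub_ne_zero.2 (by exact_mod_cast hq₁.symm)
  have hden : 1 - z / (1 - q) ≠ 0 := by
    rw [one_sub_div hq]
    exact div_ne_zero (sub_ne_zero.2 hzq.symm) hq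
  refine ((continuousAt_id.zpow₀ n (Or.inl hz₀)).mul
    ((continuousAt_const.sub continuousAt_id).zpow₀ _ (Or.inl (sub_ne_zero.2 hz₁.symm)))).div
    ((continuousAt_const.sub (continuousAt_id.div_const _)).zpow₀ _ (Or.inl hden))
    (zpow_ne_zero _ hden)

theorem continuousOn_sphere (hq₁ : q ≠ 1) (hqr : |q| < r) (hr : 1 < r) :
    ContinuousOn (Gstar q n m a) (sphere 1 r) := by
  intro z hz
  rw [mem_sphere_iff_norm] at hz
  refine (continuousAt hq₁ ?_ ?_ ?_).continuousWithinAt <;> rintro rfl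
  · simp at hz; linarith
  · simp at hz; linarith
  · simp at hz; linarith

end Gstar

section ContourIntegrals

variable {q r : ℝ}

theorem norm_one_sub_of_mem_sphere {z : ℂ} (hz : z ∈ sphere (1 : ℂ) r) : ‖1 - z‖ = r := by
  rw [norm_sub_rev]; exact mem_sphere_iff_norm.1 hz

theorem ne_zero_of_mem_sphere_one (hr : r ≠ 1) {z : ℂ} (hz : z ∈ sphere (1 : ℂ) r) : z ≠ 0 := by
  rintro rfl
  simp [eq_comm, hr] at hz

theorem cint_Gstar_add_one_sub (hq₁ : q ≠ 1) (hqr : |q| < r) (hr : 1 < r) (n m a : ℤ) :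
    cint 1 r (Gstar q n m (a + 1)) - cint 1 r (Gstar q n m a)
      = -cint 1 r (Gstar q (n + 1) m a) := by
  have hint : ∀ n a, CircleIntegrable (Gstar q n m a) 1 r := fun n a =>
    (Gstar.continuousOn_sphere hq₁ hqr hr).circleIntegrable (by linarith)
  have hstep : EqOn (fun z => Gstar q n m (a + 1) z - Gstar q n m a z)
      (fun z => -1 * Gstar q (n + 1) m a z) (sphere 1 r) := fun z hz => by
    simpa only [neg_one_mul] using
      Gstar.add_one_sub (ne_zero_of_mem_sphere_one hr.ne' hz) (ne_of_mem_sphere hz (by linarith))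
  simp only [cint]
  rw [← mul_sub, ← circleIntegral.integral_sub (hint _ _) (hint _ _),
    circleIntegral.integral_congr (by linarith) hstep, circleIntegral.integral_const_mul]
  ring

theorem hasSum_cint_Gstar_sub_natCast (hq₁ : q ≠ 1) (hqr : |q| < r) (hr : 1 < r) (n m a : ℤ) :
    HasSum (fun k : ℕ => cint 1 r (Gstar q n m (a - k)))
      (-cint 1 r (Gstar q (n - 1) m (a + 1))) := by
  have hcont : ∀ n a, ContinuousOn (Gstar q n m a) (sphere 1 r) := fun _ _ =>
    Gstar.continuousOn_sphere hq₁ hqr hr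
  obtain ⟨B, hB⟩ := (isCompact_sphere (1 : ℂ) r).exists_bound_of_continuousOn (hcont n a)
  have hgeom : Summable fun k : ℕ => B * r⁻¹ ^ k :=
    (summable_geometric_of_lt_one (by positivity) (inv_lt_one_of_one_lt₀ hr)).mul_left B
  have hsum := circleIntegral.hasSum_of_norm_le (f := fun k : ℕ => Gstar q n m (a - k))
    (g := fun z => -1 * Gstar q (n - 1) m (a + 1) z)
    (fun k => (hcont n (a - k)).circleIntegrable (by linarith)) (by linarith) hgeom
    (fun k z hz => by
      have hz' := norm_one_sub_of_mem_sphere hz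
      rw [Gstar.sub_natCast (norm_pos_iff.1 (by linarith)), norm_mul, norm_pow, norm_inv, hz']
      exact mul_le_mul_of_nonneg_right (hB z hz) (by positivity))
    (fun z hz => by
      simpa only [neg_one_mul] using Gstar.hasSum_sub_natCast
        (ne_zero_of_mem_sphere_one hr.ne' hz) (norm_one_sub_of_mem_sphere hz ▸ hr))
  rw [circleIntegral.integral_const_mul] at hsum
  simpa only [cint, neg_one_mul, mul_neg] using hsum.mul_left (2 * π * I)⁻¹

theorem cint_Gstar_zero (m : ℕ) (hq₁ : q ≠ 1) (hqr : |q| < r) (x : ℤ) :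
    cint 1 r (Gstar q 0 m (x - 1)) = -wgt q m x := by
  have hr : 0 < r := (abs_nonneg q).trans_lt hqr
  have hqr' : ‖(q : ℂ) * (r : ℂ)⁻¹‖ < 1 := by
    rwa [norm_mul, norm_inv, Complex.norm_real, Complex.norm_real, Real.norm_eq_abs,
      Real.norm_eq_abs, abs_of_pos hr, ← div_eq_mul_inv, div_lt_one hr]
  have hC : Summable fun j : ℕ => r ^ (x - 1) * ‖wgt q m j * (r : ℂ)⁻¹ ^ j‖ :=
    (summable_norm_iff.2 (hasSum_wgt_mul_pow m hqr').summable).mul_left _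
  have hsum := circleIntegral.hasSum_of_norm_le
    (f := fun j : ℕ => fun z => wgt q m j * (1 - z) ^ (x - 1 - j)) (g := Gstar q 0 m (x - 1))
    (fun j => ContinuousOn.circleIntegrable hr.le <| continuousOn_const.mul <|
      (continuousOn_const.sub continuousOn_id).zpow₀ _ fun z hz =>
        Or.inl (sub_ne_zero.2 (ne_of_mem_sphere hz hr.ne').symm))
    hr.le hC
    (fun j z hz => by
      rw [norm_mul, norm_mul, norm_zpow, norm_one_sub_of_mem_sphere hz, norm_pow, norm_inv,
        Complex.norm_real, Real.norm_eq_abs, abs_of_pos hr, zpow_sub₀ hr.ne', zpow_natCast,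
        inv_pow, div_eq_mul_inv]
      exact le_of_eq (by ring))
    (fun z hz => Gstar.hasSum_wgt_mul_one_sub_zpow m hq₁
      (norm_one_sub_of_mem_sphere hz ▸ hqr) _)
  have hcint : HasSum (fun j : ℕ => if (j : ℤ) = x then -wgt q m j else 0)
      (cint 1 r (Gstar q 0 m (x - 1))) := by
    refine (hsum.mul_left (2 * π * I)⁻¹).congr_fun fun j => ?_
    rw [← cint, cint_const_mul, cint_center_sub_zpow hr]
    simp only [show x - 1 - j = -1 ↔ (j : ℤ) = x by omega]
    split_ifs <;> ring
  rcases lt_or_ge x 0 with hx | hx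
  · have hzero : ∀ j : ℕ, (if (j : ℤ) = x then -wgt q m j else 0) = 0 := fun j =>
      if_neg (by omega)
    simp only [hzero] at hcint
    rw [hcint.unique hasSum_zero, wgt, if_neg hx.not_ge, neg_zero]
  · lift x to ℕ using hx
    simp only [Nat.cast_inj] at hcint
    refine hcint.unique ((hasSum_ite_eq x (-wgt q m x)).congr_fun fun j => ?_)
    split_ifs with h
    · rw [h]
    · rfl

end ContourIntegrals

def natEquivIntLt (x : ℤ) : ℕ ≃ {y : ℤ // y < x} where
  toFun k := ⟨x - 1 - k, by omega⟩
  invFun y := (x - 1 - y).toNat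
  left_inv k := by simp
  right_inv y := Subtype.ext (by have := y.2; simp only; omega)

theorem nabInv_apply_of_hasSum {f : ℤ → ℂ} {x : ℤ} {s : ℂ}
    (h : HasSum (fun k : ℕ => f (x - 1 - k)) s) : nabInv f x = s :=
  ((natEquivIntLt x).hasSum_iff (f := fun y : {y : ℤ // y < x} => f y.1)).1 h |>.tsum_eq

theorem nabIter_eq_of {f : ℤ → ℂ} {F : ℤ → ℤ → ℂ} (h₀ : F 0 = f)
    (hnab : ∀ n, nab (F n) = F (n + 1)) (hnabInv : ∀ n, nabInv (F n) = F (n - 1)) (n : ℤ) :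
    nabIter n f = F n := by
  have hpos : ∀ k : ℕ, nab^[k] f = F k := by
    intro k
    induction k with
    | zero => exact h₀.symm
    | succ k ih => rw [Function.iterate_succ_apply', ih, hnab, Nat.cast_succ]
  have hneg : ∀ k : ℕ, nabInv^[k] f = F (-k) := by
    intro k
    induction k with
    | zero => exact h₀.symm
    | succ k ih => rw [Function.iterate_succ_apply', ih, hnabInv, Nat.cast_succ, neg_add']
  obtain ⟨k, rfl | rfl⟩ := Int.eq_nat_or_neg n
  · simp [nabIter, hpos]
  · rcases k with _ | k
    · simp [nabIter, h₀]
    · rw [nabIter, if_neg (by omega), neg_neg, Int.toNat_natCast, hneg]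

theorem statement6_general
    (q : ℝ) (hq0 : 0 < q) (hq1 : q < 1)
    (m : ℕ) (n x : ℤ) (r : ℝ) (hr : 1 < r) :
    nabIter n (wgt q m) x
      = (-1 : ℂ) ^ (n - 1) * cint 1 r (fun z => Gstar q n (m : ℤ) (x - 1) z) := by
  have hq₁ : q ≠ 1 := hq1.ne
  have hqr : |q| < r := by rw [abs_of_pos hq0]; linarith
  have hsign : ∀ n : ℤ, (-1 : ℂ) ^ (n - 1) = -(-1) ^ n := fun n => by
    rw [zpow_sub_one₀ (by norm_num)]; norm_num
  refine congrFun (nabIter_eq_of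
    (F := fun n x => (-1 : ℂ) ^ (n - 1) * cint 1 r (Gstar q n m (x - 1))) ?_ ?_ ?_ n) x
  · funext x
    simp [cint_Gstar_zero m hq₁ hqr]
  · intro n
    funext x
    simp only [nab]
    rw [show x + 1 - 1 = x - 1 + 1 by ring, ← mul_sub, cint_Gstar_add_one_sub hq₁ hqr hr,
      add_sub_cancel_right, hsign n]
    ring
  · intro n
    funext x
    apply nabInv_apply_of_hasSum
    have h := (hasSum_cint_Gstar_sub_natCast hq₁ hqr hr n m (x - 2)).mul_left ((-1 : ℂ) ^ (n - 1))
    rw [show x - 2 + 1 = x - 1 by ring, mul_neg, ← neg_mul, ← hsign] at h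
    refine h.congr_fun fun k => ?_
    rw [show x - 1 - k - 1 = x - 2 - k by ring]

/-- (Formula (4.2) of the paper.)  For every `m ≥ 1`, `n, x ∈ ℤ`
and radius `r > 1`, `∇^n w_m(x) = (−1)^{n−1} ∮_{γ_r(1)} G*(z | n, m, x−1) dz`. -/
theorem statement6
    (q : ℝ) (hq0 : 0 < q) (hq1 : q < 1)
    (m : ℕ) (hm : 1 ≤ m) (n x : ℤ) (r : ℝ) (hr : 1 < r) :
    nabIter n (wgt q m) x
      = (-1 : ℂ) ^ (n - 1) * cint 1 r (fun z => Gstar q n (m : ℤ) (x - 1) z) :=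
  statement6_general q hq0 hq1 m n x r hr
end
end
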